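/- arXiv:1504.08294 — 4 statements merged into one kernel-verified Lean document; each statement's English description precedes it below -/
import Mathlib

section
/- Let k be a field of characteristic 0 and X a type. Let ι : FreeLieAlgebra k X → FreeAlgebra k X be the unique Lie algebra morphism into the free associative algebra (regarded as a Lie algebra via the commutator bracket) sending each generator of the free Lie algebra to the corresponding generator of the free algebra. Let S be a set of elements of FreeLieAlgebra k X, let r be the Lie ideal generated by S, and let g = (FreeLieAlgebra k X)/r. Then the universal enveloping algebra U(g) is isomorphic, as a k-algebra, to the quotient of FreeAlgebra k X by the two-sided ideal generated by the image ι(S). -/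
/-!
Taking enveloping algebras is left adjoint to viewing an associative algebra as a Lie algebra,
so it turns presentations of Lie algebras into presentations of associative algebras.
Concretely, algebra maps out of `U(L ⧸ ⟨S⟩)` and out of `U(L)` modulo the ideal generated by
`S` both correspond to Lie maps out of `L` killing `S`; and `U` of the free Lie algebra on `X`
is the free associative algebra on `X`, its canonical map becoming `ι`.
-/

noncomputable section

attribute [local instance 100] LieRing.ofAssociativeRing

/-- The unique Lie algebra morphism from the free Lie algebra on `X` into the free
associative algebra on `X` (regarded as a Lie algebra via the commutator bracket),
sending each generator to the corresponding generator. -/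
def freeLieToFreeAlgebra (k : Type*) [CommRing k] (X : Type*) :
    FreeLieAlgebra k X →ₗ⁅k⁆ FreeAlgebra k X :=
  FreeLieAlgebra.lift k (FreeAlgebra.ι k)

namespace LieIdeal

variable {R L L' : Type*} [CommRing R] [LieRing L] [LieAlgebra R L] [LieRing L']
  [LieAlgebra R L'] (I : LieIdeal R L)

def mkLieHom : L →ₗ⁅R⁆ L ⧸ I :=
  { I.toSubmodule.mkQ with map_lie' := rfl }

theorem mkLieHom_surjective : Function.Surjective (mkLieHom I) :=
  Quot.mk_surjective

def liftLieHom (f : L →ₗ⁅R⁆ L') (hf : I ≤ f.ker) : L ⧸ I →ₗ⁅R⁆ L' :=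
  { I.toSubmodule.liftQ f.toLinearMap hf with
    map_lie' := by
      rintro ⟨x⟩ ⟨y⟩
      exact f.map_lie x y }

@[simp]
theorem liftLieHom_mkLieHom (f : L →ₗ⁅R⁆ L') (hf : I ≤ f.ker) (x : L) :
    liftLieHom I f hf (mkLieHom I x) = f x :=
  rfl

end LieIdeal

namespace UniversalEnvelopingAlgebra

open LieIdeal LieSubmodule

variable (R : Type*) {L : Type*} [CommRing R] [LieRing L] [LieAlgebra R L] (S : Set L)

def quotientLieSpanEquiv :
    UniversalEnvelopingAlgebra R (L ⧸ lieSpan R L S) ≃ₐ[R]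
      RingQuot (fun a b : UniversalEnvelopingAlgebra R L => (∃ s ∈ S, a = ι R s) ∧ b = 0) :=
  AlgEquiv.ofAlgHom
    (lift R <| liftLieHom _ ((RingQuot.mkAlgHom R _).toLieHom.comp (ι R)) <|
      lieSpan_le.mpr fun s hs => LieHom.mem_ker.mpr <|
        (RingQuot.mkAlgHom_rel R ⟨⟨s, hs, rfl⟩, rfl⟩).trans (map_zero _))
    (RingQuot.liftAlgHom R ⟨lift R ((ι R).comp (mkLieHom _)), by
      rintro _ _ ⟨⟨s, hs, rfl⟩, rfl⟩
      have hs' : mkLieHom _ s = 0 := (Quotient.mk_eq_zero' (N := lieSpan R L S)).mpr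
        (subset_lieSpan hs)
      rw [lift_ι_apply, LieHom.comp_apply, hs', map_zero, map_zero]⟩)
    (by
      apply RingQuot.ringQuot_ext'
      ext x
      simp)
    (by
      ext y
      obtain ⟨x, rfl⟩ := mkLieHom_surjective _ y
      simp)

end UniversalEnvelopingAlgebra

theorem FreeLieAlgebra.universalEnvelopingEquivFreeAlgebra_ι (R X : Type*) [CommRing R]
    (x : FreeLieAlgebra R X) :
    universalEnvelopingEquivFreeAlgebra R X (UniversalEnvelopingAlgebra.ι R x) =
      freeLieToFreeAlgebra R X x :=
  UniversalEnvelopingAlgebra.lift_ι_apply R _ x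

theorem stmt1_general (k : Type*) [Field k] (X : Type*)
    (S : Set (FreeLieAlgebra k X)) :
    Nonempty
      (UniversalEnvelopingAlgebra k
          (FreeLieAlgebra k X ⧸ LieSubmodule.lieSpan k (FreeLieAlgebra k X) S) ≃ₐ[k]
        RingQuot (fun a b : FreeAlgebra k X =>
          (∃ s ∈ S, a = freeLieToFreeAlgebra k X s) ∧ b = 0)) := by
  let e := (UniversalEnvelopingAlgebra.quotientLieSpanEquiv k S).trans
    (RingQuot.algEquivQuotAlgEquiv (FreeLieAlgebra.universalEnvelopingEquivFreeAlgebra k X) _)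
  have hrel : Function.onFun (fun a b => (∃ s ∈ S, a = UniversalEnvelopingAlgebra.ι k s) ∧ b = 0)
      (FreeLieAlgebra.universalEnvelopingEquivFreeAlgebra k X).symm =
      fun a b => (∃ s ∈ S, a = freeLieToFreeAlgebra k X s) ∧ b = 0 := by
    funext a b
    simp only [Function.onFun, AlgEquiv.symm_apply_eq, map_zero,
      FreeLieAlgebra.universalEnvelopingEquivFreeAlgebra_ι]
  exact ⟨hrel ▸ e⟩

/-- Let `k` be a field of characteristic 0, `X` a type, `ι` the canonical
Lie algebra morphism `FreeLieAlgebra k X → FreeAlgebra k X`, `S` a set of elements of the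
free Lie algebra, `r` the Lie ideal generated by `S` and `g` the corresponding quotient
Lie algebra.  Then the universal enveloping algebra `U(g)` is isomorphic, as a
`k`-algebra, to the quotient of `FreeAlgebra k X` by the two-sided ideal generated by the
image `ι(S)` (realised as the `RingQuot` of the relations `ι s = 0`, `s ∈ S`). -/
theorem stmt1 (k : Type*) [Field k] [CharZero k] (X : Type*)
    (S : Set (FreeLieAlgebra k X)) :
    Nonempty
      (UniversalEnvelopingAlgebra k
          (FreeLieAlgebra k X ⧸ LieSubmodule.lieSpan k (FreeLieAlgebra k X) S) ≃ₐ[k]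
        RingQuot (fun a b : FreeAlgebra k X =>
          (∃ s ∈ S, a = freeLieToFreeAlgebra k X s) ∧ b = 0)) :=
  stmt1_general k X S
end
end

section
/- Let G be a group with a central filtration {F_k}_{k≥1}, let H be a normal subgroup of G, and let π : G → Q = G/H be the quotient map; set F̄_k = π(F_k) for each k. Then {F̄_k}_{k≥1} is a central filtration on Q; the subgroup F_{k+1}·(F_k ∩ H) is normal in F_k; and for every k ≥ 1, π induces an isomorphism of (abelian) groups F_k/(F_{k+1}·(F_k ∩ H)) ≅ F̄_k/F̄_{k+1}. (This is the degree-k component of Lazard's natural isomorphism gr^F(G)/gr^{F̃}(H) ≅ gr^{F̄}(G/H), where F̃_k H = F_k ∩ H is the induced filtration on H.) -/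
/-!
The preimage of `F̄ (k+1)` in `G` is `F (k+1) ⊔ H`, and since `H` is normal this is the product
set `F (k+1) * H`; intersecting with `F k ⊇ F (k+1)` gives `F (k+1) * (F k ∩ H)` by Dedekind's law.
This subgroup is normal in `F k` because `H` is normal and `[F k, F (k+1)] ≤ F (2k+1) ≤ F (k+1)`.
-/

open scoped commutatorElement

namespace Subgroup

variable {G : Type*} [Group G]

-- The subgroup lattice is not modular; normality of `N` makes `A ⊔ N` the product set `A * N`.
theorem sup_inf_assoc_of_le_of_normal {A C : Subgroup G} (N : Subgroup G) [N.Normal]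
    (hAC : A ≤ C) : (A ⊔ N) ⊓ C = A ⊔ C ⊓ N := by
  refine le_antisymm ?_ (le_inf (sup_le_sup_left inf_le_right A) (sup_le hAC inf_le_left))
  rintro x ⟨hxAN, hxC⟩
  obtain ⟨a, ha, n, hn, rfl⟩ := mem_sup_of_normal_right.mp hxAN
  have hnC : n ∈ C := by simpa using mul_mem (inv_mem (hAC ha)) hxC
  exact mul_mem (mem_sup_left ha) (mem_sup_right ⟨hnC, hn⟩)

theorem normal_subgroupOf_sup_inf {A C : Subgroup G} (N : Subgroup G) [N.Normal]
    (hAC : A ≤ C) (hCA : ⁅C, A⁆ ≤ A) : ((A ⊔ C ⊓ N).subgroupOf C).Normal := by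
  rw [subgroupOf_sup hAC inf_le_left, inf_subgroupOf_left]
  have : (A.subgroupOf C).Normal :=
    normal_subgroupOf_of_le_normalizer (le_normalizer_iff_commutator_le_right.mpr hCA)
  infer_instance

theorem mk_mem_map_mk_iff {A C : Subgroup G} (N : Subgroup G) [N.Normal] (hAC : A ≤ C)
    {x : G} (hx : x ∈ C) :
    QuotientGroup.mk' N x ∈ A.map (QuotientGroup.mk' N) ↔ x ∈ A ⊔ C ⊓ N := by
  rw [← mem_comap, comap_map_eq, QuotientGroup.ker_mk', ← sup_inf_assoc_of_le_of_normal N hAC,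
    mem_inf, and_iff_left hx]

end Subgroup

theorem commutator_le_right_of_central_filtration {G : Type*} [Group G] {F : ℕ → Subgroup G}
    (hFanti : AntitoneOn F (Set.Ici 1))
    (hFcomm : ∀ r s, 1 ≤ r → 1 ≤ s → ⁅F r, F s⁆ ≤ F (r + s))
    {r s : ℕ} (hr : 1 ≤ r) (hs : 1 ≤ s) : ⁅F r, F s⁆ ≤ F s :=
  (hFcomm r s hr hs).trans <| hFanti (Set.mem_Ici.mpr hs)
    (Set.mem_Ici.mpr (by omega)) (by omega)

/-- **Lazard.** Let `G` be a group with a central filtration `F` (so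
`F 1 = G`, `F` is decreasing, and `[F r, F s] ≤ F (r+s)`), let `H` be a normal subgroup
of `G`, let `π : G → Q = G/H` be the quotient map, and set `F̄ k = π(F k)`.  Then:
(1) `F̄` is a central filtration on `Q`;
(2) for every `k ≥ 1`, the subgroup `F (k+1) ⊔ (F k ⊓ H)` (the product
    `F_{k+1}·(F_k ∩ H)`) is a normal subgroup of `F k`;
(3) for every `k ≥ 1`, `π` induces an isomorphism
    `F k/(F (k+1)·(F k ∩ H)) ≅ F̄ k/F̄ (k+1)`, expressed elementwise: the map
    `F k → F̄ k/F̄ (k+1)` induced by `π` is surjective with kernel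
    `F (k+1) ⊔ (F k ⊓ H)`. -/
theorem stmt4 (G : Type*) [Group G] (F : ℕ → Subgroup G)
    (hF1 : F 1 = ⊤) (hFdec : ∀ r, 1 ≤ r → F (r + 1) ≤ F r)
    (hFcomm : ∀ r s, 1 ≤ r → 1 ≤ s → ⁅F r, F s⁆ ≤ F (r + s))
    (H : Subgroup G) [H.Normal] :
    -- (1) the image filtration is a central filtration on `Q = G/H`:
    ((F 1).map (QuotientGroup.mk' H) = ⊤ ∧
      (∀ r, 1 ≤ r →
        (F (r + 1)).map (QuotientGroup.mk' H) ≤ (F r).map (QuotientGroup.mk' H)) ∧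
      (∀ r s, 1 ≤ r → 1 ≤ s →
        ⁅(F r).map (QuotientGroup.mk' H), (F s).map (QuotientGroup.mk' H)⁆ ≤
          (F (r + s)).map (QuotientGroup.mk' H))) ∧
    -- (2) `F (k+1) · (F k ∩ H)` is normal in `F k`:
    (∀ r, 1 ≤ r → ((F (r + 1) ⊔ (F r ⊓ H)).subgroupOf (F r)).Normal) ∧
    -- (3) `π` induces an isomorphism `F k/(F (k+1)·(F k ∩ H)) ≅ F̄ k/F̄ (k+1)`:
    (∀ r, 1 ≤ r →
      (∀ y ∈ (F r).map (QuotientGroup.mk' H), ∃ x ∈ F r, QuotientGroup.mk' H x = y) ∧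
      (∀ x ∈ F r,
        (QuotientGroup.mk' H x ∈ (F (r + 1)).map (QuotientGroup.mk' H) ↔
          x ∈ F (r + 1) ⊔ (F r ⊓ H)))) := by
  have hFanti : AntitoneOn F (Set.Ici 1) :=
    antitoneOn_nat_Ici_of_succ_le fun r hr => hFdec r hr
  refine ⟨⟨?_, fun r hr => Subgroup.map_mono (hFdec r hr), fun r s hr hs => ?_⟩,
    fun r hr => ?_, fun r hr => ⟨fun _ hy => hy, fun x hx => ?_⟩⟩
  · rw [hF1, Subgroup.map_top_of_surjective _ (QuotientGroup.mk'_surjective H)]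
  · rw [← Subgroup.map_commutator]
    exact Subgroup.map_mono (hFcomm r s hr hs)
  · exact Subgroup.normal_subgroupOf_sup_inf H (hFdec r hr)
      (commutator_le_right_of_central_filtration hFanti hFcomm hr (by omega))
  · exact Subgroup.mk_mem_map_mk_iff H (hFdec r hr) hx
end

section
/- Let G be a group, H a normal subgroup of G, and Q a subgroup of G with H ∩ Q = {1} and HQ = G (so G is the internal semidirect product H ⋊ Q). Suppose Q acts trivially on the abelianization of H, i.e., for all q ∈ Q and h ∈ H the commutator qhq⁻¹h⁻¹ lies in [H, H]. Then for every r ≥ 1: (i) Γ_r G ∩ H = Γ_r H (the lower central series filtration of G induces the lower central series of H); and (ii) the inclusion H ≤ G and the projection G → Q induce a short exact sequence of abelian groups 0 → Γ_r H/Γ_{r+1} H → Γ_r G/Γ_{r+1} G → Γ_r Q/Γ_{r+1} Q → 0, which is split by the map induced by the inclusion Q ≤ G. -/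
/-!
Indices start at `Γ₀ G = G`. Since `Q` acts trivially on `H / [H, H]`, so does `G = H Q`, and
the three subgroups lemma upgrades `[G, H] ≤ [H, H]` to `[Γₖ G, Γⱼ H] ≤ Γ_{j+k+1} H`. Hence `Γₙ G = Γₙ H ⊔ Γₙ Q` by induction: the right-hand side is
normal because `[H, Γₙ Q] ≤ Γₙ H`, and its commutator with `G = H ⊔ Q` lands in
`Γ_{n+1} H ⊔ Γ_{n+1} Q` term by term. Intersecting with `H` (Dedekind's law and `H ⊓ Q = ⊥`)
gives (i); for (ii), write `x ∈ Γₙ G` as `(x ρ(x)⁻¹) ρ(x)` with `x ρ(x)⁻¹ ∈ Γₙ G ⊓ H = Γₙ H`.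
-/

namespace Subgroup

open scoped commutatorElement

variable {G : Type*} [Group G]

theorem commutator_le_iff_map_mk'_eq_bot {A B T : Subgroup G} [T.Normal] :
    ⁅A, B⁆ ≤ T ↔ ⁅A.map (QuotientGroup.mk' T), B.map (QuotientGroup.mk' T)⁆ = ⊥ := by
  rw [← map_commutator, map_eq_bot_iff, QuotientGroup.ker_mk']

theorem commutator_commutator_le_of_rotate {A B C T : Subgroup G} [T.Normal]
    (h1 : ⁅⁅B, C⁆, A⁆ ≤ T) (h2 : ⁅⁅C, A⁆, B⁆ ≤ T) : ⁅⁅A, B⁆, C⁆ ≤ T := by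
  simp only [commutator_le_iff_map_mk'_eq_bot, map_commutator] at h1 h2 ⊢
  exact commutator_commutator_eq_bot_of_rotate h1 h2

theorem sup_commutator_le {A B C T : Subgroup G} [T.Normal]
    (hA : ⁅A, C⁆ ≤ T) (hB : ⁅B, C⁆ ≤ T) : ⁅A ⊔ B, C⁆ ≤ T := by
  simp only [commutator_le_iff_map_mk'_eq_bot, commutator_eq_bot_iff_le_centralizer,
    map_sup] at hA hB ⊢
  exact sup_le hA hB

theorem commutator_sup_le {A B C T : Subgroup G} [T.Normal]
    (hA : ⁅C, A⁆ ≤ T) (hB : ⁅C, B⁆ ≤ T) : ⁅C, A ⊔ B⁆ ≤ T := by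
  rw [commutator_comm] at hA hB ⊢
  exact sup_commutator_le hA hB

theorem le_normalizer_sup_of_commutator_le {H N K : Subgroup G} [N.Normal]
    (hHK : ⁅H, K⁆ ≤ N) : H ≤ normalizer (N ⊔ K : Subgroup G) := by
  rw [le_normalizer_iff]
  intro h hh t ht
  refine (sup_le (fun n hn ↦ ?_) (fun k hk ↦ ?_) : N ⊔ K ≤ (N ⊔ K).comap (MulAut.conj h)) ht
  · exact mem_sup_left (Normal.conj_mem inferInstance n hn h)
  · have hcomm : h * k * h⁻¹ = ⁅h, k⁆ * k := by group
    change h * k * h⁻¹ ∈ N ⊔ K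
    rw [hcomm]
    exact mul_mem (mem_sup_left (hHK (commutator_mem_commutator hh hk))) (mem_sup_right hk)

theorem normal_sup_of_commutator_le {H Q N K : Subgroup G} [N.Normal] (hsup : H ⊔ Q = ⊤)
    (hHK : ⁅H, K⁆ ≤ N) (hQK : Q ≤ normalizer K) : (N ⊔ K).Normal := by
  rw [← normalizer_eq_top_iff, eq_top_iff, ← hsup]
  exact sup_le (le_normalizer_sup_of_commutator_le hHK)
    ((le_inf le_normalizer_of_normal hQK).trans (normalizer_inf_normalizer_le_normalizer_sup N K))

theorem normal_sup_inf_assoc_of_le {N C : Subgroup G} [N.Normal] (B : Subgroup G) (h : N ≤ C) :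
    (N ⊔ B) ⊓ C = N ⊔ B ⊓ C := by
  apply SetLike.coe_injective
  rw [coe_inf, normal_mul, normal_mul, mul_inf_assoc N B C h]

theorem commutator_top_lowerCentralSeries_le (i j : ℕ) :
    ⁅(⊤ : Subgroup G).lowerCentralSeries i, (⊤ : Subgroup G).lowerCentralSeries j⁆ ≤
      (⊤ : Subgroup G).lowerCentralSeries (i + j + 1) := by
  induction j generalizing i with
  | zero => rfl
  | succ j ih =>
    rw [lowerCentralSeries_succ, commutator_comm]
    apply commutator_commutator_le_of_rotate
    · rw [commutator_comm ⊤, ← lowerCentralSeries_succ]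
      convert ih (i + 1) using 2
      omega
    · exact commutator_mono (ih i) le_rfl

theorem commutator_lowerCentralSeries_le (S : Subgroup G) (i j : ℕ) :
    ⁅S.lowerCentralSeries i, S.lowerCentralSeries j⁆ ≤ S.lowerCentralSeries (i + j + 1) := by
  rw [← top_subtype_lowerCentralSeries S i, ← top_subtype_lowerCentralSeries S j,
    ← top_subtype_lowerCentralSeries S, ← map_commutator]
  exact map_mono (commutator_top_lowerCentralSeries_le i j)

section TrivialActionOnAbelianization

variable {H : Subgroup G} [H.Normal] (hH : ⁅(⊤ : Subgroup G), H⁆ ≤ ⁅H, H⁆)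
include hH

theorem commutator_top_left_lowerCentralSeries_le (j : ℕ) :
    ⁅(⊤ : Subgroup G), H.lowerCentralSeries j⁆ ≤ H.lowerCentralSeries (j + 1) := by
  induction j with
  | zero => exact hH
  | succ j ih =>
    rw [lowerCentralSeries_succ H j, commutator_comm]
    apply commutator_commutator_le_of_rotate
    · calc ⁅⁅H, ⊤⁆, H.lowerCentralSeries j⁆ ≤ ⁅H.lowerCentralSeries 1, H.lowerCentralSeries j⁆ :=
            commutator_mono (commutator_comm H ⊤ ▸ hH) le_rfl
        _ ≤ H.lowerCentralSeries (j + 1 + 1) := by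
            convert commutator_lowerCentralSeries_le H 1 j using 2
            omega
    · exact commutator_mono ih le_rfl

theorem commutator_top_lowerCentralSeries_lowerCentralSeries_le (k j : ℕ) :
    ⁅(⊤ : Subgroup G).lowerCentralSeries k, H.lowerCentralSeries j⁆ ≤
      H.lowerCentralSeries (j + k + 1) := by
  induction k generalizing j with
  | zero => exact commutator_top_left_lowerCentralSeries_le hH j
  | succ k ih =>
    rw [lowerCentralSeries_succ]
    apply commutator_commutator_le_of_rotate
    · calc ⁅⁅⊤, H.lowerCentralSeries j⁆, (⊤ : Subgroup G).lowerCentralSeries k⁆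
          ≤ ⁅H.lowerCentralSeries (j + 1), (⊤ : Subgroup G).lowerCentralSeries k⁆ :=
            commutator_mono (commutator_top_left_lowerCentralSeries_le hH j) le_rfl
        _ ≤ H.lowerCentralSeries (j + (k + 1) + 1) := by
            rw [commutator_comm]
            convert ih (j + 1) using 2
            omega
    · calc ⁅⁅H.lowerCentralSeries j, (⊤ : Subgroup G).lowerCentralSeries k⁆, ⊤⁆
          ≤ ⁅⊤, H.lowerCentralSeries (j + k + 1)⁆ := by
            rw [commutator_comm _ ⊤, commutator_comm (H.lowerCentralSeries j)]
            exact commutator_mono le_rfl (ih j)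
        _ ≤ H.lowerCentralSeries (j + (k + 1) + 1) :=
            commutator_top_left_lowerCentralSeries_le hH _

end TrivialActionOnAbelianization

theorem commutator_top_le_of_sup_eq_top {H Q : Subgroup G} [H.Normal] (hsup : H ⊔ Q = ⊤)
    (hQ : ⁅Q, H⁆ ≤ ⁅H, H⁆) : ⁅(⊤ : Subgroup G), H⁆ ≤ ⁅H, H⁆ :=
  hsup ▸ sup_commutator_le le_rfl hQ

section SemidirectProduct

variable {H Q : Subgroup G} [H.Normal] (hsup : H ⊔ Q = ⊤) (hH : ⁅(⊤ : Subgroup G), H⁆ ≤ ⁅H, H⁆)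
include hsup hH

theorem top_lowerCentralSeries_eq_sup (n : ℕ) :
    (⊤ : Subgroup G).lowerCentralSeries n = H.lowerCentralSeries n ⊔ Q.lowerCentralSeries n := by
  induction n with
  | zero => exact hsup.symm
  | succ n ih =>
    refine le_antisymm ?_ (sup_le (lowerCentralSeries_mono _ le_top)
      (lowerCentralSeries_mono _ le_top))
    have hQH : ⁅Q.lowerCentralSeries n, H⁆ ≤ H.lowerCentralSeries (n + 1) := by
      simpa using commutator_mono (lowerCentralSeries_mono n le_top) le_rfl |>.trans
        (commutator_top_lowerCentralSeries_lowerCentralSeries_le hH n 0)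
    have : (H.lowerCentralSeries (n + 1) ⊔ Q.lowerCentralSeries (n + 1)).Normal := by
      refine normal_sup_of_commutator_le hsup ?_ (self_le_normalizer_lowerCentralSeries Q _)
      rw [commutator_comm]
      exact (commutator_mono (lowerCentralSeries_antitone Q n.le_succ) le_rfl).trans hQH
    rw [lowerCentralSeries_succ, ih, ← hsup]
    refine sup_commutator_le (commutator_sup_le ?_ ?_) (commutator_sup_le ?_ ?_)
    · exact le_sup_left
    · rw [commutator_comm]
      exact (commutator_mono le_top le_rfl |>.trans
        (commutator_top_left_lowerCentralSeries_le hH n)).trans le_sup_left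
    · exact hQH.trans le_sup_left
    · exact le_sup_right

theorem top_lowerCentralSeries_inf_eq (hinf : H ⊓ Q = ⊥) (n : ℕ) :
    (⊤ : Subgroup G).lowerCentralSeries n ⊓ H = H.lowerCentralSeries n := by
  have hQH : Q.lowerCentralSeries n ⊓ H = ⊥ :=
    le_bot_iff.mp (hinf ▸ inf_comm Q H ▸ inf_le_inf_right H (lowerCentralSeries_le_self Q n))
  rw [top_lowerCentralSeries_eq_sup hsup hH,
    normal_sup_inf_assoc_of_le _ (lowerCentralSeries_le_self H n), hQH, sup_bot_eq]

end SemidirectProduct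

theorem coe_mem_lowerCentralSeries_iff (Q : Subgroup G) (q : Q) (n : ℕ) :
    (q : G) ∈ Q.lowerCentralSeries n ↔ q ∈ (⊤ : Subgroup Q).lowerCentralSeries n := by
  rw [← top_subtype_lowerCentralSeries]
  exact mem_map_iff_mem Q.subtype_injective

theorem map_mem_top_lowerCentralSeries {K : Type*} [Group K] (f : G →* K) {n : ℕ} {x : G}
    (hx : x ∈ (⊤ : Subgroup G).lowerCentralSeries n) :
    f x ∈ (⊤ : Subgroup K).lowerCentralSeries n :=
  lowerCentralSeries_mono n le_top (map_lowerCentralSeries ⊤ f n ▸ mem_map_of_mem f hx)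

theorem map_mem_top_lowerCentralSeries_succ_iff {H Q : Subgroup G} {ρ : G →* Q}
    (hρid : ∀ q : Q, ρ q = q) (hρker : ρ.ker = H) {n : ℕ}
    (hinter : (⊤ : Subgroup G).lowerCentralSeries n ⊓ H = H.lowerCentralSeries n) {x : G}
    (hx : x ∈ (⊤ : Subgroup G).lowerCentralSeries n) :
    ρ x ∈ (⊤ : Subgroup Q).lowerCentralSeries (n + 1) ↔
      ∃ h ∈ H.lowerCentralSeries n, h⁻¹ * x ∈ (⊤ : Subgroup G).lowerCentralSeries (n + 1) := by
  have hker : ∀ g, ρ g = 1 ↔ g ∈ H := fun g ↦ by rw [← MonoidHom.mem_ker, hρker]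
  constructor
  · intro hρx
    have hρx' : (ρ x : G) ∈ (⊤ : Subgroup G).lowerCentralSeries n :=
      lowerCentralSeries_mono n le_top
        ((coe_mem_lowerCentralSeries_iff Q _ n).mpr (map_mem_top_lowerCentralSeries ρ hx))
    refine ⟨x * (ρ x : G)⁻¹, hinter ▸ mem_inf.mpr ⟨mul_mem hx (inv_mem hρx'), ?_⟩, ?_⟩
    · rw [← hker, map_mul, map_inv, hρid, mul_inv_cancel]
    · rw [mul_inv_rev, inv_inv, inv_mul_cancel_right]
      exact lowerCentralSeries_mono _ le_top ((coe_mem_lowerCentralSeries_iff Q _ _).mpr hρx)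
  · rintro ⟨h, hh, hmem⟩
    rw [← mul_inv_cancel_left h x, map_mul, (hker h).mpr (lowerCentralSeries_le_self H n hh),
      one_mul]
    exact map_mem_top_lowerCentralSeries ρ hmem

end Subgroup

/-- **Falk–Randell.** Let `G` be a group, `H` a normal subgroup and `Q` a
subgroup with `H ⊓ Q = ⊥` and `H ⊔ Q = ⊤` (so `G = H ⋊ Q` internally), and let
`ρ : G → Q` be the projection (the retraction with `ρ ∘ incl = id` and `ker ρ = H`).
Suppose `Q` acts trivially on the abelianization of `H`, i.e. `q h q⁻¹ h⁻¹ ∈ [H, H]`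
for all `q ∈ Q`, `h ∈ H`.  Then for every `n` (with `Γ_{n+1}` denoting
`lowerCentralSeries · n`):
(i)  `Γ_{n+1} G ⊓ H = Γ_{n+1} H`; and
(ii) the inclusion `H ≤ G` and the projection `ρ` induce a short exact sequence
`0 → Γ_{n+1}H/Γ_{n+2}H → Γ_{n+1}G/Γ_{n+2}G → Γ_{n+1}Q/Γ_{n+2}Q → 0`
of abelian groups, split by the map induced by the inclusion `Q ≤ G`; this is expressed
elementwise below (well-definedness, injectivity, exactness in the middle, and the
splitting induced by the inclusion, which also yields surjectivity). -/
theorem stmt5 (G : Type*) [Group G] (H Q : Subgroup G) [H.Normal]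
    (hinf : H ⊓ Q = ⊥) (hsup : H ⊔ Q = ⊤)
    (htriv : ∀ q ∈ Q, ∀ h ∈ H, q * h * q⁻¹ * h⁻¹ ∈ ⁅H, H⁆)
    (ρ : G →* Q) (hρid : ∀ q : Q, ρ (q : G) = q) (hρker : ρ.ker = H) (n : ℕ) :
    -- (i) the LCS filtration of `G` induces the LCS of `H`:
    ((⊤ : Subgroup G).lowerCentralSeries n ⊓ H = ((⊤ : Subgroup H).lowerCentralSeries n).map H.subtype) ∧
    -- the maps of the sequence are well defined:
    (((⊤ : Subgroup H).lowerCentralSeries n).map H.subtype ≤ (⊤ : Subgroup G).lowerCentralSeries n) ∧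
    (∀ x ∈ (⊤ : Subgroup G).lowerCentralSeries n, ρ x ∈ (⊤ : Subgroup Q).lowerCentralSeries n) ∧
    -- (ii) injectivity of `gr_{n+1}(H) → gr_{n+1}(G)`:
    (∀ x ∈ ((⊤ : Subgroup H).lowerCentralSeries n).map H.subtype,
      x ∈ (⊤ : Subgroup G).lowerCentralSeries (n + 1) →
        x ∈ ((⊤ : Subgroup H).lowerCentralSeries (n + 1)).map H.subtype) ∧
    -- (ii) exactness at `gr_{n+1}(G)`:
    (∀ x ∈ (⊤ : Subgroup G).lowerCentralSeries n,
      (ρ x ∈ (⊤ : Subgroup Q).lowerCentralSeries (n + 1) ↔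
        ∃ h ∈ ((⊤ : Subgroup H).lowerCentralSeries n).map H.subtype,
          h⁻¹ * x ∈ (⊤ : Subgroup G).lowerCentralSeries (n + 1))) ∧
    -- (ii) the splitting induced by the inclusion `Q ≤ G` (in particular
    -- `gr_{n+1}(G) → gr_{n+1}(Q)` is a split surjection, since `ρ ∘ incl = id`):
    (∀ q : Q, q ∈ (⊤ : Subgroup Q).lowerCentralSeries n → (q : G) ∈ (⊤ : Subgroup G).lowerCentralSeries n) := by
  open Subgroup in
  have hH := commutator_top_le_of_sup_eq_top hsup (commutator_le.mpr htriv)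
  have hinter := top_lowerCentralSeries_inf_eq hsup hH hinf
  simp only [top_subtype_lowerCentralSeries]
  refine ⟨hinter n, lowerCentralSeries_mono n le_top,
    fun x hx ↦ map_mem_top_lowerCentralSeries ρ hx,
    fun x hx hx1 ↦ hinter (n + 1) ▸ mem_inf.mpr ⟨hx1, lowerCentralSeries_le_self H n hx⟩,
    fun x hx ↦ map_mem_top_lowerCentralSeries_succ_iff hρid hρker (hinter n) hx,
    fun q hq ↦ lowerCentralSeries_mono n le_top ((coe_mem_lowerCentralSeries_iff Q q n).mpr hq)⟩
end

section
/- Let k be a field of characteristic 0, V a finite-dimensional k-vector space, and K ⊆ ⋀²V a subspace. Let A = ⋀(V)/⟨K⟩ be the corresponding commutative quadratic algebra, written as A = T(V)/I where T(V) is the tensor algebra and I is the kernel of the canonical algebra surjection T(V) → A; set I₂ = I ∩ (V⊗V), and define the quadratic dual A^! = T(V*)/⟨I₂^⊥⟩, where I₂^⊥ = {α ∈ V*⊗V* : α vanishes on I₂}. Then the universal enveloping algebra U(h(A)) of the holonomy Lie algebra h(A) = lie(V*)/⟨K^∨⟩ is isomorphic to A^! as a k-algebra; in particular, U(h(A)) is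 a quadratic algebra. -/
/-!
Let `S ⊆ V ⊗ V` be spanned by the squares `v ⊗ v` together with `K`. Letting `T(V)` act on
`k ⊕ V ⊕ (V ⊗ V)/S` by truncated left multiplication shows that `I₂ = S`. Away from characteristic 2 a tensor
in `V* ⊗ V*` kills all squares iff it is antisymmetric, so `I₂^⊥ = ι(K^∨)`.
On the Lie side, `U(lie(V*)) = T(V*)`, and the bracket of an antisymmetric `α` becomes
`α - τα = 2α` in `T(V*)`; hence the Lie relations `K^∨` and the associative relations `I₂^⊥`
generate the same ideal, and `U(lie(V*)/⟨K^∨⟩) ≅ T(V*)/⟨I₂^⊥⟩ = A^!`.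
-/

open TensorProduct

noncomputable section

variable (k : Type*) [Field k] [CharZero k]

/-- The image of `⋀²V` in `V ⊗ V` under `v ∧ w ↦ v ⊗ w - w ⊗ v`:
the subspace of antisymmetric tensors. -/
def asym (V : Type*) [AddCommGroup V] [Module k V] : Submodule k (V ⊗[k] V) :=
  LinearMap.range
    ((LinearMap.id : V ⊗[k] V →ₗ[k] V ⊗[k] V) - (TensorProduct.comm k V V).toLinearMap)

/-- For a subspace `W ⊆ ⋀²V` (of antisymmetric tensors), the image `ι(W^∨) ⊆ V* ⊗ V*`
of the annihilator `W^∨ = {α ∈ ⋀²(V*) : α(W) = 0}` of `W` under the canonical pairing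
between `⋀²(V*)` and `⋀²V`. -/
def dualRel (V : Type*) [AddCommGroup V] [Module k V]
    (W : Submodule k (V ⊗[k] V)) :
    Submodule k (Module.Dual k V ⊗[k] Module.Dual k V) :=
  asym k (Module.Dual k V) ⊓
    Submodule.comap (TensorProduct.dualDistrib k V V) W.dualAnnihilator

/-- The multiplication map `V ⊗ V → T(V)`, `v ⊗ w ↦ ι v * ι w`. -/
def mul2 (V : Type*) [AddCommGroup V] [Module k V] :
    V ⊗[k] V →ₗ[k] TensorAlgebra k V :=
  TensorProduct.lift ((LinearMap.mul k (TensorAlgebra k V)).compl₁₂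
    (TensorAlgebra.ι k) (TensorAlgebra.ι k))

/-- The defining relations of the commutative quadratic algebra `A = ⋀(V)/⟨K⟩`,
presented as the tensor algebra `T(V)` modulo `v ⊗ v = 0` (`v ∈ V`, giving the
exterior algebra) and `m = 0` (`m ∈ K`). -/
def quadCgaRel (V : Type*) [AddCommGroup V] [Module k V]
    (K : Submodule k (V ⊗[k] V)) :
    TensorAlgebra k V → TensorAlgebra k V → Prop := fun a b =>
  ((∃ v : V, a = TensorAlgebra.ι k v * TensorAlgebra.ι k v) ∨
      (∃ m ∈ K, a = mul2 k V m)) ∧ b = 0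

/-- Writing `A = ⋀(V)/⟨K⟩ = T(V)/I`, this is `I₂ = I ∩ (V ⊗ V)`, the degree-two part
of the defining ideal, viewed as a subspace of `V ⊗ V`. -/
def I2 (V : Type*) [AddCommGroup V] [Module k V] (K : Submodule k (V ⊗[k] V)) :
    Submodule k (V ⊗[k] V) :=
  Submodule.comap (mul2 k V)
    ((RingHom.ker (RingQuot.mkAlgHom k (quadCgaRel k V K)).toRingHom).restrictScalars k)

/-- `I₂^⊥ = {α ∈ V* ⊗ V* : α(I₂) = 0}`. -/
def I2perp (V : Type*) [AddCommGroup V] [Module k V] (K : Submodule k (V ⊗[k] V)) :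
    Submodule k (Module.Dual k V ⊗[k] Module.Dual k V) :=
  Submodule.comap (TensorProduct.dualDistrib k V V) (I2 k V K).dualAnnihilator

/-- The quadratic dual `A^! = T(V*)/⟨I₂^⊥⟩`. -/
def shriekRel (V : Type*) [AddCommGroup V] [Module k V]
    (K : Submodule k (V ⊗[k] V)) :
    TensorAlgebra k (Module.Dual k V) → TensorAlgebra k (Module.Dual k V) → Prop :=
  fun a b => (∃ α ∈ I2perp k V K, a = mul2 k (Module.Dual k V) α) ∧ b = 0

/-- The Lie bracket of a Lie algebra, as a bilinear map. -/
def bracketBilin (L : Type*) [LieRing L] [LieAlgebra k L] : L →ₗ[k] L →ₗ[k] L :=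
  LinearMap.mk₂ k (fun x y => ⁅x, y⁆) add_lie smul_lie lie_add lie_smul

/-- The linear map `M → FreeLieAlgebra k ι` determined by a basis of `M`: the
realization of the free Lie algebra on `M` as the free Lie algebra on a basis. -/
def toFreeLie {ι : Type*} [Fintype ι] [DecidableEq ι] (M : Type*)
    [AddCommGroup M] [Module k M] (b : Module.Basis ι k M) : M →ₗ[k] FreeLieAlgebra k ι :=
  b.constr k fun i => FreeLieAlgebra.of k i

/-- The map `M ⊗ M → FreeLieAlgebra k ι`, `v ⊗ w ↦ ⁅v, w⁆`, identifying `M` with the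
degree-one part of the free Lie algebra via the basis `b`. -/
def brMap {ι : Type*} [Fintype ι] [DecidableEq ι] (M : Type*)
    [AddCommGroup M] [Module k M] (b : Module.Basis ι k M) :
    M ⊗[k] M →ₗ[k] FreeLieAlgebra k ι :=
  TensorProduct.lift ((bracketBilin k (FreeLieAlgebra k ι)).compl₁₂
    (toFreeLie k M b) (toFreeLie k M b))

section TensorSquare

variable {k : Type*} [Field k] {M : Type*} [AddCommGroup M] [Module k M]

lemma comm_eq_neg_of_mem_asym {α : M ⊗[k] M} (h : α ∈ asym k M) :
    TensorProduct.comm k M M α = -α := by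
  obtain ⟨β, rfl⟩ := h
  simp

lemma mem_asym_of_comm_eq_neg [NeZero (2 : k)] {α : M ⊗[k] M}
    (h : TensorProduct.comm k M M α = -α) : α ∈ asym k M :=
  ⟨(2 : k)⁻¹ • α, by
    simp [h, ← two_smul k α, smul_smul, inv_mul_cancel₀ (two_ne_zero (α := k))]⟩

lemma mul2_tmul (v w : M) : mul2 k M (v ⊗ₜ w) = TensorAlgebra.ι k v * TensorAlgebra.ι k w :=
  rfl

end TensorSquare

section DegreeTwoRelations

variable {k : Type*} [Field k] {V : Type*} [AddCommGroup V] [Module k V]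

/-- Left multiplication of `T(V)` on `T(V)/(S + T^{≥3}(V)) = k ⊕ V ⊕ (V ⊗ V)/S`. -/
def truncAction (S : Submodule k (V ⊗[k] V)) :
    V →ₗ[k] Module.End k (k × V × (V ⊗[k] V ⧸ S)) :=
  LinearMap.mk₂ k (fun v p => (0, p.1 • v, S.mkQ (v ⊗ₜ p.2.1)))
    (fun _ _ _ => by simp [add_tmul]) (fun c v p => by simp [smul_comm p.1 c, ← smul_tmul'])
    (fun _ _ _ => by simp [add_smul, tmul_add]) (fun _ _ _ => by simp [mul_smul, tmul_smul])

lemma lift_truncAction_mul2 (S : Submodule k (V ⊗[k] V)) (m : V ⊗[k] V)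
    (p : k × V × (V ⊗[k] V ⧸ S)) :
    TensorAlgebra.lift k (truncAction S) (mul2 k V m) p = (0, 0, p.1 • S.mkQ m) := by
  induction m using TensorProduct.induction_on with
  | zero => ext <;> simp
  | tmul v w => simp [mul2_tmul, truncAction, tmul_smul]
  | add x y hx hy => simp [map_add, hx, hy, smul_add]

lemma I2_eq_span_tmul_self_sup (K : Submodule k (V ⊗[k] V)) :
    I2 k V K = Submodule.span k (Set.range fun v : V => v ⊗ₜ v) ⊔ K := by
  set S := Submodule.span k (Set.range fun v : V => v ⊗ₜ v) ⊔ K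
  have mem_I2 : ∀ m, quadCgaRel k V K (mul2 k V m) 0 → m ∈ I2 k V K :=
    fun _ h => (RingQuot.mkAlgHom_rel k h).trans (map_zero _)
  refine le_antisymm (fun m hm => ?_) (sup_le ?_ fun m hm => ?_)
  · have hS : ∀ m ∈ S, TensorAlgebra.lift k (truncAction S) (mul2 k V m) = 0 := fun m hm => by
      ext p <;> simp [lift_truncAction_mul2, hm]
    have hrel : ∀ ⦃a b⦄, quadCgaRel k V K a b →
        TensorAlgebra.lift k (truncAction S) a = TensorAlgebra.lift k (truncAction S) b := by
      rintro _ _ ⟨⟨v, rfl⟩ | ⟨m, hm, rfl⟩, rfl⟩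
      · rw [map_zero]
        exact hS _ (Submodule.mem_sup_left (Submodule.subset_span ⟨v, rfl⟩))
      · rw [map_zero]
        exact hS _ (Submodule.mem_sup_right hm)
    have hm : RingQuot.mkAlgHom k (quadCgaRel k V K) (mul2 k V m) = 0 := hm
    have := congr($(congrArg (RingQuot.liftAlgHom k ⟨_, hrel⟩) hm) (1, 0, 0))
    rw [RingQuot.liftAlgHom_mkAlgHom_apply, lift_truncAction_mul2] at this
    simpa using this
  · rw [Submodule.span_le]
    rintro _ ⟨v, rfl⟩
    exact mem_I2 _ ⟨.inl ⟨v, rfl⟩, rfl⟩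
  · exact mem_I2 m ⟨.inr ⟨m, hm, rfl⟩, rfl⟩

end DegreeTwoRelations

section Annihilator

variable {k : Type*} [Field k] [NeZero (2 : k)] {V : Type*} [AddCommGroup V] [Module k V]
  [FiniteDimensional k V]

lemma mem_asym_dual_iff (α : Module.Dual k V ⊗[k] Module.Dual k V) :
    α ∈ asym k (Module.Dual k V) ↔ ∀ v : V, dualDistrib k V V α (v ⊗ₜ v) = 0 := by
  refine ⟨fun h v => ?_, fun h => mem_asym_of_comm_eq_neg ?_⟩
  · have hneg : dualDistrib k V V α (v ⊗ₜ v) = -dualDistrib k V V α (v ⊗ₜ v) := by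
      rw [← LinearMap.neg_apply, ← map_neg, ← comm_eq_neg_of_mem_asym h,
        ← dualDistrib_apply_comm, comm_tmul]
    rwa [eq_neg_iff_add_eq_zero, ← two_mul, mul_eq_zero, or_iff_right two_ne_zero] at hneg
  · have dualDistrib_injective : Function.Injective (dualDistrib k V V) :=
      (dualDistribEquiv k V V).injective
    refine dualDistrib_injective (TensorProduct.ext' fun v w => ?_)
    have polarization := h (v + w)
    simp only [add_tmul, tmul_add, map_add, h v, h w] at polarization
    rw [← dualDistrib_apply_comm, comm_tmul, map_neg (dualDistrib k V V) α, LinearMap.neg_apply]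
    linear_combination polarization

lemma dualRel_eq_I2perp (K : Submodule k (V ⊗[k] V)) : dualRel k V K = I2perp k V K := by
  rw [dualRel, I2perp, I2_eq_span_tmul_self_sup, Submodule.dualAnnihilator_sup_eq,
    Submodule.comap_inf]
  congr 1
  ext α
  rw [mem_asym_dual_iff, Submodule.mem_comap, ← SetLike.mem_coe,
    Submodule.coe_dualAnnihilator_span]
  simp [Set.range_subset_iff]

end Annihilator

namespace LieIdeal

variable {R L L' : Type*} [CommRing R] [LieRing L] [LieAlgebra R L] [LieRing L'] [LieAlgebra R L']
  (J : LieIdeal R L)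

def mkQ : L →ₗ⁅R⁆ L ⧸ J :=
  { (LieSubmodule.Quotient.mk' J : L →ₗ[R] L ⧸ J) with
    map_lie' := fun {x y} => LieSubmodule.Quotient.mk_bracket J x y }

lemma mkQ_surjective : Function.Surjective J.mkQ :=
  LieSubmodule.Quotient.surjective_mk' J

lemma mkQ_eq_zero {x : L} : J.mkQ x = 0 ↔ x ∈ J :=
  LieSubmodule.Quotient.mk_eq_zero'

def liftQ (f : L →ₗ⁅R⁆ L') (h : J ≤ f.ker) : L ⧸ J →ₗ⁅R⁆ L' :=
  { J.toSubmodule.liftQ (f : L →ₗ[R] L') fun x hx => LieHom.mem_ker.mp (h hx) with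
    map_lie' := fun {x y} => by
      obtain ⟨x, rfl⟩ := J.mkQ_surjective x
      obtain ⟨y, rfl⟩ := J.mkQ_surjective y
      rw [← J.mkQ.map_lie]
      exact f.map_lie x y }

@[simp]
lemma liftQ_mkQ (f : L →ₗ⁅R⁆ L') (h : J ≤ f.ker) (x : L) : J.liftQ f h (J.mkQ x) = f x :=
  rfl

end LieIdeal

section Envelope

attribute [local instance] LieRing.ofAssociativeRing

variable {k : Type*} [Field k] {ι : Type*} [Fintype ι] [DecidableEq ι]
  {M : Type*} [AddCommGroup M] [Module k M] (c : Module.Basis ι k M) (W : Submodule k (M ⊗[k] M))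

def quadraticRel : TensorAlgebra k M → TensorAlgebra k M → Prop :=
  fun a b => (∃ α ∈ W, a = mul2 k M α) ∧ b = 0

lemma mkAlgHom_mul2_eq_zero {α : M ⊗[k] M} (hα : α ∈ W) :
    RingQuot.mkAlgHom k (quadraticRel W) (mul2 k M α) = 0 :=
  (RingQuot.mkAlgHom_rel k ⟨⟨α, hα, rfl⟩, rfl⟩).trans (map_zero _)

def presentedLieIdeal : LieIdeal k (FreeLieAlgebra k ι) :=
  LieSubmodule.lieSpan k (FreeLieAlgebra k ι) (brMap k M c '' W)

lemma brMap_mem_presentedLieIdeal {α : M ⊗[k] M} (hα : α ∈ W) :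
    brMap k M c α ∈ presentedLieIdeal c W :=
  LieSubmodule.subset_lieSpan (Set.mem_image_of_mem _ hα)

lemma brMap_tmul (v w : M) :
    brMap k M c (v ⊗ₜ w) = ⁅toFreeLie k M c v, toFreeLie k M c w⁆ :=
  rfl

lemma sub_comm_eq_two_smul {α : M ⊗[k] M} (hα : α ∈ asym k M) :
    α - TensorProduct.comm k M M α = (2 : k) • α := by
  rw [comm_eq_neg_of_mem_asym hα, sub_neg_eq_add, two_smul]

def freeLieToQuadratic : FreeLieAlgebra k ι →ₗ⁅k⁆ RingQuot (quadraticRel W) :=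
  FreeLieAlgebra.lift k fun i => RingQuot.mkAlgHom k (quadraticRel W) (TensorAlgebra.ι k (c i))

lemma freeLieToQuadratic_toFreeLie (m : M) :
    freeLieToQuadratic c W (toFreeLie k M c m) = RingQuot.mkAlgHom k _ (TensorAlgebra.ι k m) := by
  have h : (freeLieToQuadratic c W : _ →ₗ[k] _) ∘ₗ toFreeLie k M c
      = (RingQuot.mkAlgHom k (quadraticRel W)).toLinearMap ∘ₗ TensorAlgebra.ι k :=
    c.ext fun i => by simp [toFreeLie, freeLieToQuadratic]
  exact LinearMap.congr_fun h m

lemma freeLieToQuadratic_brMap (α : M ⊗[k] M) :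
    freeLieToQuadratic c W (brMap k M c α)
      = RingQuot.mkAlgHom k _ (mul2 k M (α - TensorProduct.comm k M M α)) := by
  induction α using TensorProduct.induction_on with
  | zero => simp
  | tmul v w =>
    simp [brMap_tmul, freeLieToQuadratic_toFreeLie, mul2_tmul, Ring.lie_def]
  | add x y hx hy => simp only [map_add, hx, hy, add_sub_add_comm]

lemma presentedLieIdeal_le_ker (hW : W ≤ asym k M) :
    presentedLieIdeal c W ≤ (freeLieToQuadratic c W).ker := by
  rw [presentedLieIdeal, LieSubmodule.lieSpan_le]
  rintro _ ⟨α, hα, rfl⟩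
  rw [SetLike.mem_coe, LieHom.mem_ker, freeLieToQuadratic_brMap, sub_comm_eq_two_smul (hW hα),
    map_smul, map_smul, mkAlgHom_mul2_eq_zero W hα, smul_zero]

def envelopeToQuadratic (hW : W ≤ asym k M) :
    UniversalEnvelopingAlgebra k (FreeLieAlgebra k ι ⧸ presentedLieIdeal c W) →ₐ[k]
      RingQuot (quadraticRel W) :=
  UniversalEnvelopingAlgebra.lift k
    ((presentedLieIdeal c W).liftQ (freeLieToQuadratic c W) (presentedLieIdeal_le_ker c W hW))

def tensorToEnvelope :
    TensorAlgebra k M →ₐ[k]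
      UniversalEnvelopingAlgebra k (FreeLieAlgebra k ι ⧸ presentedLieIdeal c W) :=
  TensorAlgebra.lift k
    (((UniversalEnvelopingAlgebra.ι k).comp (presentedLieIdeal c W).mkQ : _ →ₗ[k] _) ∘ₗ
      toFreeLie k M c)

lemma tensorToEnvelope_mul2 (α : M ⊗[k] M) :
    tensorToEnvelope c W (mul2 k M (α - TensorProduct.comm k M M α))
      = UniversalEnvelopingAlgebra.ι k ((presentedLieIdeal c W).mkQ (brMap k M c α)) := by
  induction α using TensorProduct.induction_on with
  | zero => simp
  | tmul v w =>
    simp [brMap_tmul, tensorToEnvelope, mul2_tmul, Ring.lie_def]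
  | add x y hx hy => simp only [map_add, add_sub_add_comm, hx, hy]

def quadraticToEnvelope [NeZero (2 : k)] (hW : W ≤ asym k M) :
    RingQuot (quadraticRel W) →ₐ[k]
      UniversalEnvelopingAlgebra k (FreeLieAlgebra k ι ⧸ presentedLieIdeal c W) :=
  RingQuot.liftAlgHom k ⟨tensorToEnvelope c W, by
    rintro _ _ ⟨⟨α, hα, rfl⟩, rfl⟩
    have h := tensorToEnvelope_mul2 c W α
    rw [(LieIdeal.mkQ_eq_zero _).mpr (brMap_mem_presentedLieIdeal c W hα),
      map_zero, sub_comm_eq_two_smul (hW hα), map_smul, map_smul] at h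
    rw [map_zero]
    exact (smul_eq_zero.mp h).resolve_left two_ne_zero⟩

lemma quadraticToEnvelope_freeLieToQuadratic [NeZero (2 : k)] (hW : W ≤ asym k M)
    (a : FreeLieAlgebra k ι) :
    quadraticToEnvelope c W hW (freeLieToQuadratic c W a)
      = UniversalEnvelopingAlgebra.ι k ((presentedLieIdeal c W).mkQ a) := by
  have h : (quadraticToEnvelope c W hW : _ →ₗ⁅k⁆ _).comp (freeLieToQuadratic c W)
      = (UniversalEnvelopingAlgebra.ι k).comp (presentedLieIdeal c W).mkQ :=
    FreeLieAlgebra.hom_ext fun i => by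
      simp [freeLieToQuadratic, quadraticToEnvelope, tensorToEnvelope, toFreeLie]
  exact LieHom.congr_fun h a

def envelopeEquivQuadratic [NeZero (2 : k)] (hW : W ≤ asym k M) :
    UniversalEnvelopingAlgebra k (FreeLieAlgebra k ι ⧸ presentedLieIdeal c W) ≃ₐ[k]
      RingQuot (quadraticRel W) :=
  AlgEquiv.ofAlgHom (envelopeToQuadratic c W hW) (quadraticToEnvelope c W hW)
    (by
      ext m
      simp [quadraticToEnvelope, tensorToEnvelope, envelopeToQuadratic,
        freeLieToQuadratic_toFreeLie])
    (by
      ext x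
      obtain ⟨a, rfl⟩ := (presentedLieIdeal c W).mkQ_surjective x
      simp [envelopeToQuadratic, quadraticToEnvelope_freeLieToQuadratic])

end Envelope

theorem stmt8 (V : Type*) [AddCommGroup V] [Module k V] [FiniteDimensional k V]
    (n : ℕ) (b : Module.Basis (Fin n) k V)
    (K : Submodule k (V ⊗[k] V)) :
    Nonempty
      (UniversalEnvelopingAlgebra k
          (FreeLieAlgebra k (Fin n) ⧸
            LieSubmodule.lieSpan k (FreeLieAlgebra k (Fin n))
              (brMap k (Module.Dual k V) b.dualBasis ''
                (dualRel k V K : Set (Module.Dual k V ⊗[k] Module.Dual k V)))) ≃ₐ[k]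
        RingQuot (shriekRel k V K)) := by
  have hI2perp : I2perp k V K ≤ asym k (Module.Dual k V) := dualRel_eq_I2perp K ▸ inf_le_left
  rw [dualRel_eq_I2perp]
  exact ⟨envelopeEquivQuadratic b.dualBasis (I2perp k V K) hI2perp⟩
end
end
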